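/- arXiv:0904.0593 — 5 statements merged into one kernel-verified Lean document; each statement's English description precedes it below -/
import Mathlib

section
/- Let f : ℝ → ℝ be a lift of a monotone continuous circle map of degree d (i.e. f is nondecreasing, continuous, and f(x+1) = f(x) + d for all x). If φ, ψ : ℝ → ℝ are nondecreasing continuous maps satisfying φ(x+1) = φ(x) + 1, ψ(x+1) = ψ(x) + 1, φ ∘ f = 2·φ, and ψ ∘ f = 2·ψ, then φ = ψ. -/
/-- Uniqueness of the semiconjugacy to the doubling map: if `f` is a lift of a
monotone continuous degree-`d` circle map and `φ, ψ` are nondecreasing continuous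
degree-1 lifts with `φ ∘ f = 2·φ` and `ψ ∘ f = 2·ψ`, then `φ = ψ`. -/
theorem stmt_0 (f φ ψ : ℝ → ℝ) (d : ℤ)
    (hf_mono : Monotone f) (hf_cont : Continuous f)
    (hf_deg : ∀ x, f (x + 1) = f x + d)
    (hφ_mono : Monotone φ) (hφ_cont : Continuous φ)
    (hφ_deg : ∀ x, φ (x + 1) = φ x + 1)
    (hψ_mono : Monotone ψ) (hψ_cont : Continuous ψ)
    (hψ_deg : ∀ x, ψ (x + 1) = ψ x + 1)
    (hφ_semi : ∀ x, φ (f x) = 2 * φ x)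
    (hψ_semi : ∀ x, ψ (f x) = 2 * ψ x) :
    φ = ψ := by
  set g : ℝ → ℝ := fun x => φ x - ψ x with hg
  have hg_cont : Continuous g := hφ_cont.sub hψ_cont
  have hg_per : Function.Periodic g 1 := by
    intro x; simp [hg, hφ_deg x, hψ_deg x]
  have hg_semi : ∀ x, g (f x) = 2 * g x := by
    intro x; simp [hg, hφ_semi x, hψ_semi x]; ring
  -- |g| attains its max on [0,1]
  obtain ⟨x₀, hx₀, hmax⟩ :=
    (isCompact_Icc (a := (0:ℝ)) (b := 1)).exists_isMaxOn (Set.nonempty_Icc.2 zero_le_one)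
      ((hg_cont.abs).continuousOn)
  have hbound : ∀ y, |g y| ≤ |g x₀| := by
    intro y
    have hfr : g (Int.fract y) = g y := by
      have h := hg_per.sub_int_mul_eq (x := y) ⌊y⌋
      rw [Int.fract]
      simpa using h
    have hmem : Int.fract y ∈ Set.Icc (0:ℝ) 1 :=
      ⟨Int.fract_nonneg y, (Int.fract_lt_one y).le⟩
    calc |g y| = |g (Int.fract y)| := by rw [hfr]
      _ ≤ |g x₀| := hmax hmem
  have h2 : 2 * |g x₀| ≤ |g x₀| := by
    have := hbound (f x₀)
    rwa [hg_semi x₀, abs_mul, abs_two] at this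
  have hzero : |g x₀| ≤ 0 := by linarith
  funext x
  have := (hbound x).trans hzero
  have : g x = 0 := abs_nonpos_iff.mp this
  have : φ x - ψ x = 0 := this
  linarith
end

section
/- For every p ≥ 1, the map a ↦ F_{a,1}^{∘p}(1/2) from ℝ to ℝ is strictly increasing, and its partial derivative with respect to a is at least 1 for all a. -/
/-- Lift of the double standard map. -/
noncomputable def F (a b : ℝ) : ℝ → ℝ :=
  fun x => 2 * x + a - (b / Real.pi) * Real.sin (2 * Real.pi * x)

/-!
By the chain rule, `dₙ := ∂ₐ (F a b)^[n] x₀` satisfies `d₀ = 0` and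
`dₙ₊₁ = (2 - 2 b cos (2π xₙ)) dₙ + 1`, where `xₙ = (F a b)^[n] x₀`. For `|b| ≤ 1` the factor `∂ₓ F a b = 2 - 2 b cos (2π x)`
is nonnegative, so every `dₙ` is nonnegative and hence every `dₙ₊₁` is at least `1`.
-/

open Real

theorem hasDerivAt_F_comp {b d a : ℝ} {g : ℝ → ℝ} (hg : HasDerivAt g d a) :
    HasDerivAt (fun a => F a b (g a)) ((2 - 2 * b * cos (2 * π * g a)) * d + 1) a := by
  have hsin : HasDerivAt (fun a => sin (2 * π * g a)) (cos (2 * π * g a) * (2 * π * d)) a :=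
    (hasDerivAt_sin _).comp a (hg.const_mul (2 * π))
  refine (((hg.const_mul 2).fun_add (hasDerivAt_id' a)).fun_sub
    (hsin.const_mul (b / π))).congr_deriv ?_
  field_simp
  ring

theorem two_sub_two_mul_cos_nonneg {b : ℝ} (hb : |b| ≤ 1) (θ : ℝ) : 0 ≤ 2 - 2 * b * cos θ := by
  have hcos : b * cos θ ≤ 1 := calc
    b * cos θ ≤ |b * cos θ| := le_abs_self _
    _ = |b| * |cos θ| := abs_mul _ _
    _ ≤ 1 * 1 := mul_le_mul hb (abs_cos_le_one θ) (abs_nonneg _) zero_le_one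
    _ = 1 := one_mul 1
  linarith

theorem hasDerivAt_iterate_succ_F {b d a x₀ : ℝ} {n : ℕ}
    (hd : HasDerivAt (fun a => (F a b)^[n] x₀) d a) :
    HasDerivAt (fun a => (F a b)^[n + 1] x₀)
      ((2 - 2 * b * cos (2 * π * (F a b)^[n] x₀)) * d + 1) a := by
  simpa only [Function.iterate_succ_apply'] using hasDerivAt_F_comp (b := b) hd

theorem exists_hasDerivAt_iterate_F_nonneg {b : ℝ} (hb : |b| ≤ 1) (x₀ a : ℝ) (n : ℕ) :
    ∃ d, HasDerivAt (fun a => (F a b)^[n] x₀) d a ∧ 0 ≤ d := by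
  induction n with
  | zero => exact ⟨0, hasDerivAt_const a x₀, le_rfl⟩
  | succ n ih =>
    obtain ⟨d, hd, hd_nonneg⟩ := ih
    have := two_sub_two_mul_cos_nonneg hb (2 * π * (F a b)^[n] x₀)
    exact ⟨_, hasDerivAt_iterate_succ_F hd, by positivity⟩

theorem exists_hasDerivAt_iterate_succ_F_one_le {b : ℝ} (hb : |b| ≤ 1) (x₀ a : ℝ) (n : ℕ) :
    ∃ d, HasDerivAt (fun a => (F a b)^[n + 1] x₀) d a ∧ 1 ≤ d := by
  obtain ⟨d, hd, hd_nonneg⟩ := exists_hasDerivAt_iterate_F_nonneg hb x₀ a n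
  have := two_sub_two_mul_cos_nonneg hb (2 * π * (F a b)^[n] x₀)
  exact ⟨_, hasDerivAt_iterate_succ_F hd, le_add_of_nonneg_left (by positivity)⟩

/-- For `p ≥ 1`, `a ↦ F_{a,1}^{∘p}(1/2)` is strictly increasing and its derivative
with respect to `a` is at least `1` everywhere. -/
theorem stmt_3 (p : ℕ) (hp : 1 ≤ p) :
    StrictMono (fun a : ℝ => (F a 1)^[p] (1/2)) ∧
    ∀ a : ℝ, ∃ d : ℝ, HasDerivAt (fun a : ℝ => (F a 1)^[p] (1/2)) d a ∧ 1 ≤ d := by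
  obtain ⟨n, rfl⟩ := Nat.exists_eq_add_of_le' hp
  have hderiv a := exists_hasDerivAt_iterate_succ_F_one_le abs_one.le (1 / 2) a n
  refine ⟨strictMono_of_deriv_pos fun a => ?_, hderiv⟩
  obtain ⟨d, hd, hd_one⟩ := hderiv a
  rw [hd.deriv]
  linarith
end

section
/- For every p ≥ 1 and a ∈ ℝ, F_{a,1}^{∘p}(1/2) satisfies: the induced circle map a ↦ f_{a,1}^{∘p}(1/2) (mod 1) is a degree (2^p − 1) map of the circle; i.e., F_{a+1,1}^{∘p}(1/2) − F_{a,1}^{∘p}(1/2) = 2^p − 1. -/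
lemma F_iter_add_one (a : ℝ) (n : ℕ) (x : ℝ) :
    (F (a + 1) 1)^[n] x = (F a 1)^[n] x + (2 ^ n - 1) := by
  induction n with
  | zero => simp
  | succ n ih =>
    rw [Function.iterate_succ_apply', Function.iterate_succ_apply', ih]
    have hsin : Real.sin (2 * Real.pi * ((F a 1)^[n] x + (2 ^ n - 1)))
        = Real.sin (2 * Real.pi * (F a 1)^[n] x) := by
      have : (2 : ℝ) ^ n - 1 = ((2 ^ n - 1 : ℤ) : ℝ) := by push_cast; ring
      rw [this,
        show 2 * Real.pi * ((F a 1)^[n] x + ((2 ^ n - 1 : ℤ) : ℝ))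
          = 2 * Real.pi * (F a 1)^[n] x + ((2 ^ n - 1 : ℤ) : ℝ) * (2 * Real.pi) by ring,
        Real.sin_add_int_mul_two_pi]
    simp only [F, hsin]
    ring

/-- The parameter map `a ↦ f_{a,1}^{∘p}(1/2)` has degree `2^p − 1`:
`F_{a+1,1}^{∘p}(1/2) − F_{a,1}^{∘p}(1/2) = 2^p − 1`. -/
theorem stmt_4 (p : ℕ) (hp : 1 ≤ p) (a : ℝ) :
    (F (a + 1) 1)^[p] (1/2) - (F a 1)^[p] (1/2) = 2 ^ p - 1 := by
  rw [F_iter_add_one]; ring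
end

section
/- Let u and v be polynomials of degrees p ≥ 1 and q ≥ 1 respectively, and g(z) = z² e^{u(1/z) + v(z)} on ℂ*. Then g'(z) = z^{1−p} P(z) e^{u(1/z)+v(z)}, where P(z) = z^{p+1} v'(z) + 2 z^p − z^{p−1} u'(1/z) is a polynomial of degree p + q with nonzero constant term; hence g has exactly p + q critical points in ℂ* counted with multiplicity. -/
open Polynomial

lemma natDegree_reflect_le' {f : Polynomial ℂ} {N : ℕ} (hf : f.natDegree ≤ N) :
    (Polynomial.reflect N f).natDegree ≤ N := by
  apply Polynomial.natDegree_le_iff_coeff_eq_zero.mpr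
  intro i hi
  rw [Polynomial.coeff_reflect, Polynomial.revAt_eq_self_of_lt hi]
  exact Polynomial.coeff_eq_zero_of_natDegree_lt (lt_of_le_of_lt hf hi)

lemma eval_reflect_eq {f : Polynomial ℂ} {N : ℕ} (hf : f.natDegree ≤ N)
    {z : ℂ} (hz : z ≠ 0) :
    (Polynomial.reflect N f).eval z = z ^ N * f.eval (1 / z) := by
  have hz' : (z : ℂ)⁻¹ ≠ 0 := inv_ne_zero hz
  letI : Invertible (z⁻¹ : ℂ) := invertibleOfNonzero hz'
  have h := Polynomial.eval₂_reflect_mul_pow (RingHom.id ℂ) (z⁻¹) N f hf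
  have hinv : (⅟ (z⁻¹ : ℂ)) = z := by
    rw [invOf_eq_inv]
    exact inv_inv z
  rw [hinv] at h
  simp only [Polynomial.eval₂_eq_eval_map, Polynomial.map_id] at h
  have hzN : (z : ℂ) ^ N ≠ 0 := pow_ne_zero _ hz
  rw [one_div, ← h, inv_pow]
  field_simp

/-- For `g(z) = z² e^{u(1/z)+v(z)}` with `deg u = p ≥ 1`, `deg v = q ≥ 1`, one has
`g'(z) = z^{1−p} P(z) e^{u(1/z)+v(z)}` where `P(z) = z^{p+1}v'(z) + 2z^p − z^{p−1}u'(1/z)`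
is a polynomial of degree `p+q` with nonzero constant term; hence `g` has exactly
`p+q` critical points in `ℂ*` counted with multiplicity. -/
theorem stmt_8 (u v : Polynomial ℂ) (p q : ℕ)
    (hu : u.natDegree = p) (hv : v.natDegree = q) (hp : 1 ≤ p) (hq : 1 ≤ q)
    (g : ℂ → ℂ)
    (hg : ∀ z : ℂ, z ≠ 0 →
      g z = z ^ 2 * Complex.exp (u.eval (1 / z) + v.eval z)) :
    ∃ P : Polynomial ℂ,
      P.natDegree = p + q ∧ P.coeff 0 ≠ 0 ∧
      (∀ z : ℂ, z ≠ 0 →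
        P.eval z = z ^ (p + 1) * (Polynomial.derivative v).eval z + 2 * z ^ p -
          z ^ (p - 1) * (Polynomial.derivative u).eval (1 / z)) ∧
      (∀ z : ℂ, z ≠ 0 →
        deriv g z = z ^ ((1 : ℤ) - p) * P.eval z *
          Complex.exp (u.eval (1 / z) + v.eval z)) ∧
      (Multiset.card P.roots = p + q ∧
        ∀ z ∈ P.roots, z ≠ 0 ∧ deriv g z = 0) := by
  set u' := Polynomial.derivative u with hu'
  set v' := Polynomial.derivative v with hv'
  have hu'deg : u'.natDegree ≤ p - 1 := hu ▸ Polynomial.natDegree_derivative_le u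
  have hv'deg : v'.natDegree ≤ q - 1 := hv ▸ Polynomial.natDegree_derivative_le v
  set R := Polynomial.reflect (p - 1) u' with hR
  set P := v' * Polynomial.X ^ (p + 1) + Polynomial.C 2 * Polynomial.X ^ p - R with hP
  -- key coefficients
  have hucoeff : u.coeff p ≠ 0 := by
    rw [← hu]
    exact Polynomial.leadingCoeff_ne_zero.mpr (fun h => by simp [h] at hu; omega)
  have hvcoeff : v.coeff q ≠ 0 := by
    rw [← hv]
    exact Polynomial.leadingCoeff_ne_zero.mpr (fun h => by simp [h] at hv; omega)
  have hu'coeff : u'.coeff (p - 1) ≠ 0 := by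
    rw [hu', Polynomial.coeff_derivative]
    have : p - 1 + 1 = p := by omega
    rw [this]
    exact mul_ne_zero hucoeff (Nat.cast_add_one_ne_zero (p - 1))
  have hv'coeff : v'.coeff (q - 1) ≠ 0 := by
    rw [hv', Polynomial.coeff_derivative]
    have : q - 1 + 1 = q := by omega
    rw [this]
    exact mul_ne_zero hvcoeff (Nat.cast_add_one_ne_zero (q - 1))
  have hRdeg : R.natDegree ≤ p - 1 := natDegree_reflect_le' hu'deg
  -- coeff 0 of P
  have hPcoeff0 : P.coeff 0 = -u'.coeff (p - 1) := by
    rw [hP]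
    simp only [Polynomial.coeff_sub, Polynomial.coeff_add, Polynomial.coeff_mul_X_pow',
      Polynomial.coeff_C_mul, Polynomial.coeff_X_pow]
    rw [hR, Polynomial.coeff_reflect, Polynomial.revAt_le (Nat.zero_le _)]
    have h1 : ¬ (p + 1 ≤ 0) := by omega
    have h2 : (0 : ℕ) ≠ p := by omega
    have h3 : p ≠ 0 := by omega
    simp [h1, if_neg h2, h3]
  have hP0 : P.coeff 0 ≠ 0 := by rw [hPcoeff0]; simpa using hu'coeff
  -- top coefficient of P
  have hPtop : P.coeff (p + q) ≠ 0 := by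
    rw [hP]
    simp only [Polynomial.coeff_sub, Polynomial.coeff_add, Polynomial.coeff_mul_X_pow',
      Polynomial.coeff_C_mul, Polynomial.coeff_X_pow]
    have h1 : p + 1 ≤ p + q := by omega
    have h2 : p + q - (p + 1) = q - 1 := by omega
    have h3 : ¬ ((p + q : ℕ) = p) := by omega
    have h4 : R.coeff (p + q) = 0 :=
      Polynomial.coeff_eq_zero_of_natDegree_lt (lt_of_le_of_lt hRdeg (by omega))
    rw [if_pos h1, h2, h4]
    have h5 : p + q - p = q := by omega
    have h6 : ¬ q = 0 := by omega
    simp only [Polynomial.coeff_C, h5, if_neg h6, if_pos (by omega : p ≤ p + q),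
      add_zero, sub_zero]
    exact hv'coeff
  have hPdegle : P.natDegree ≤ p + q := by
    refine le_trans (Polynomial.natDegree_sub_le _ _) ?_
    simp only [max_le_iff]
    refine ⟨le_trans (Polynomial.natDegree_add_le _ _) ?_, by omega⟩
    simp only [max_le_iff]
    constructor
    · refine le_trans (Polynomial.natDegree_mul_le) ?_
      simp only [Polynomial.natDegree_X_pow]
      omega
    · refine le_trans (Polynomial.natDegree_mul_le) ?_
      simp only [Polynomial.natDegree_C, Polynomial.natDegree_X_pow]
      omega
  have hPdeg : P.natDegree = p + q :=
    le_antisymm hPdegle (Polynomial.le_natDegree_of_ne_zero hPtop)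
  have hPne : P ≠ 0 := fun h => hP0 (by simp [h])
  -- eval formula
  have hPeval : ∀ z : ℂ, z ≠ 0 →
      P.eval z = z ^ (p + 1) * v'.eval z + 2 * z ^ p - z ^ (p - 1) * u'.eval (1 / z) := by
    intro z hz
    rw [hP]
    simp only [Polynomial.eval_sub, Polynomial.eval_add, Polynomial.eval_mul,
      Polynomial.eval_pow, Polynomial.eval_X, Polynomial.eval_C]
    rw [hR, eval_reflect_eq hu'deg hz]
    ring
  -- derivative of g
  have hderiv : ∀ z : ℂ, z ≠ 0 →
      deriv g z = (2 * z - u'.eval (1 / z) + z ^ 2 * v'.eval z) *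
        Complex.exp (u.eval (1 / z) + v.eval z) := by
    intro z hz
    have hU : HasDerivAt (fun w : ℂ => u.eval (1 / w))
        (u'.eval (1 / z) * (-(z ^ 2)⁻¹)) z := by
      have h1 : HasDerivAt (fun w : ℂ => 1 / w) (-(z ^ 2)⁻¹) z := by
        simpa [one_div] using hasDerivAt_inv hz
      exact (u.hasDerivAt (1 / z)).comp z h1
    have hUV : HasDerivAt (fun w : ℂ => u.eval (1 / w) + v.eval w)
        (u'.eval (1 / z) * (-(z ^ 2)⁻¹) + v'.eval z) z := hU.add (v.hasDerivAt z)
    have hE : HasDerivAt (fun w : ℂ => Complex.exp (u.eval (1 / w) + v.eval w))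
        (Complex.exp (u.eval (1 / z) + v.eval z) *
          (u'.eval (1 / z) * (-(z ^ 2)⁻¹) + v'.eval z)) z := hUV.cexp
    have hF : HasDerivAt (fun w : ℂ => w ^ 2 * Complex.exp (u.eval (1 / w) + v.eval w))
        ((2 * z) * Complex.exp (u.eval (1 / z) + v.eval z) +
          z ^ 2 * (Complex.exp (u.eval (1 / z) + v.eval z) *
            (u'.eval (1 / z) * (-(z ^ 2)⁻¹) + v'.eval z))) z := by
      have hpow : HasDerivAt (fun w : ℂ => w ^ 2) (2 * z) z := by
        simpa using hasDerivAt_pow 2 z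
      exact hpow.mul hE
    have hEq : g =ᶠ[nhds z] fun w => w ^ 2 * Complex.exp (u.eval (1 / w) + v.eval w) := by
      filter_upwards [IsOpen.mem_nhds isOpen_ne hz] with w hw
      exact hg w hw
    rw [Filter.EventuallyEq.deriv_eq hEq, hF.deriv]
    field_simp
    ring
  refine ⟨P, hPdeg, hP0, hPeval, ?_, ?_, ?_⟩
  · intro z hz
    rw [hderiv z hz, hPeval z hz]
    have h1 : (z : ℂ) ^ ((1 : ℤ) - p) = z / z ^ p := by
      rw [zpow_sub₀ hz]
      simp [zpow_natCast]
    rw [h1]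
    have hzp : (z : ℂ) ^ p ≠ 0 := pow_ne_zero _ hz
    have hsplit : z ^ (p + 1) = z ^ p * z := by ring
    have hsplit2 : z ^ p = z ^ (p - 1) * z := by
      rw [← pow_succ]
      congr 1
      omega
    field_simp
    rw [hsplit, hsplit2]
    ring
  · rw [← hPdeg]
    exact (Polynomial.splits_iff_card_roots.mp (IsAlgClosed.splits P))
  · intro z hzr
    have hzroot : P.eval z = 0 := (Polynomial.mem_roots hPne).mp hzr
    have hz : z ≠ 0 := by
      intro h
      rw [h, ← Polynomial.coeff_zero_eq_eval_zero] at hzroot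
      exact hP0 hzroot
    refine ⟨hz, ?_⟩
    rw [hderiv z hz]
    have : (2 * z - u'.eval (1 / z) + z ^ 2 * v'.eval z) = 0 := by
      have h := hPeval z hz
      rw [hzroot] at h
      have hzp1 : (z : ℂ) ^ (p - 1) ≠ 0 := pow_ne_zero _ hz
      have hsplit : z ^ (p + 1) = z ^ (p - 1) * z ^ 2 := by
        rw [← pow_add]
        congr 1
        omega
      have hsplit2 : z ^ p = z ^ (p - 1) * z := by
        rw [← pow_succ]
        congr 1
        omega
      rw [hsplit, hsplit2] at h
      have h2 : z ^ (p - 1) * (z ^ 2 * v'.eval z + 2 * z - u'.eval (1 / z)) = 0 := by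
        linear_combination -h
      rcases mul_eq_zero.mp h2 with h3 | h3
      · exact absurd h3 hzp1
      · linear_combination h3
    rw [this, zero_mul]
end

section
/- Let g(z) = λ z² e^{−(bz − c/z)} with |λ| = 1 and b, c ∈ ℂ*. If g is symmetric with respect to the unit circle (g(1/conj(z)) = 1/conj(g(z)) for all z ∈ ℂ*), then c = conj(b) and λ has the form e^{2πia} with a ∈ ℝ. -/
/-!
Taking moduli in `g (1 / conj z) = 1 / conj (g z)`, the factors `‖z‖ ^ 2` cancel and the
exponential factors must multiply to `1`, so `Re (c z̄ - b / z̄ + c / z - b z) = 0` for every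
`z ≠ 0`. At `z = 1` this says `Re c = Re b`, at `z = i` it says `Im c = -Im b`.
-/

open Complex

theorem norm_mul_sq_mul_exp {l : ℂ} (hl : ‖l‖ = 1) (b c z : ℂ) :
    ‖l * z ^ 2 * exp (-(b * z - c / z))‖ = ‖z‖ ^ 2 * Real.exp (c / z - b * z).re := by
  rw [norm_mul, norm_mul, hl, norm_pow, norm_exp, neg_sub, one_mul]

theorem exists_eq_exp_two_pi_I_mul_of_norm_eq_one {l : ℂ} (hl : ‖l‖ = 1) :
    ∃ a : ℝ, l = exp (2 * Real.pi * I * a) := by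
  obtain ⟨θ, rfl⟩ := (norm_eq_one_iff l).mp hl
  refine ⟨θ / (2 * Real.pi), ?_⟩
  congr 1
  push_cast
  field_simp

theorem re_exponent_sum_eq_zero_of_symm {l b c : ℂ} (hl : ‖l‖ = 1) {g : ℂ → ℂ}
    (hg : ∀ z : ℂ, z ≠ 0 → g z = l * z ^ 2 * exp (-(b * z - c / z)))
    (hsym : ∀ z : ℂ, z ≠ 0 → g (1 / (starRingEnd ℂ) z) = 1 / (starRingEnd ℂ) (g z))
    {z : ℂ} (hz : z ≠ 0) :
    (c * (starRingEnd ℂ) z - b / (starRingEnd ℂ) z + (c / z - b * z)).re = 0 := by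
  have hz' : (starRingEnd ℂ) z ≠ 0 := (map_ne_zero _).mpr hz
  have hnorm := congrArg norm (hsym z hz)
  rw [hg _ (one_div_ne_zero hz'), hg z hz, norm_div, norm_one, norm_conj,
    norm_mul_sq_mul_exp hl, norm_mul_sq_mul_exp hl, norm_div, norm_one, norm_conj,
    show c / (1 / (starRingEnd ℂ) z) - b * (1 / (starRingEnd ℂ) z)
      = c * (starRingEnd ℂ) z - b / (starRingEnd ℂ) z by field_simp,
    eq_div_iff (by positivity)] at hnorm
  rw [add_re, ← Real.exp_eq_one_iff, Real.exp_add, ← hnorm]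
  field_simp

theorem stmt_10_general (l b c : ℂ) (hl : ‖l‖ = 1)
    (g : ℂ → ℂ)
    (hg : ∀ z : ℂ, z ≠ 0 → g z = l * z ^ 2 * Complex.exp (-(b * z - c / z)))
    (hsym : ∀ z : ℂ, z ≠ 0 → g (1 / (starRingEnd ℂ) z) = 1 / (starRingEnd ℂ) (g z)) :
    c = (starRingEnd ℂ) b ∧ ∃ a : ℝ, l = Complex.exp (2 * Real.pi * Complex.I * a) := by
  have at_one := re_exponent_sum_eq_zero_of_symm hl hg hsym one_ne_zero
  have at_I := re_exponent_sum_eq_zero_of_symm hl hg hsym I_ne_zero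
  simp only [map_one, mul_one, div_one, add_re, sub_re, add_self_eq_zero, conj_I, mul_neg,
    div_neg, div_I, neg_neg, neg_re, mul_re, I_re, mul_zero, I_im, zero_sub, sub_neg_eq_add]
    at at_one at_I
  refine ⟨Complex.ext ?_ ?_, exists_eq_exp_two_pi_I_mul_of_norm_eq_one hl⟩
  · simp only [conj_re]; linarith
  · simp only [conj_im]; linarith

/-- If `g(z) = λ z² e^{−(bz − c/z)}` with `|λ| = 1`, `b, c ≠ 0`, is symmetric with
respect to the unit circle, then `c = conj b` and `λ = e^{2πia}` for some `a ∈ ℝ`. -/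
theorem stmt_10 (l b c : ℂ) (hl : ‖l‖ = 1) (hb : b ≠ 0) (hc : c ≠ 0)
    (g : ℂ → ℂ)
    (hg : ∀ z : ℂ, z ≠ 0 → g z = l * z ^ 2 * Complex.exp (-(b * z - c / z)))
    (hsym : ∀ z : ℂ, z ≠ 0 → g (1 / (starRingEnd ℂ) z) = 1 / (starRingEnd ℂ) (g z)) :
    c = (starRingEnd ℂ) b ∧ ∃ a : ℝ, l = Complex.exp (2 * Real.pi * Complex.I * a) :=
  stmt_10_general l b c hl g hg hsym
end
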